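/- arXiv:1804.03794 — 3 statements merged into one kernel-verified Lean document; each statement's English description precedes it below -/
import Mathlib

section
/- Let A be a real symmetric d×d matrix such that A − 2nc·I is positive semidefinite, where n > 0 and c > 0 are real numbers, and let u, v ∈ ℝ^d be vectors with ‖v‖₂² ≤ t for some t ≥ 0. Then det(A + v vᵀ) ≤ (1 + t/(2nc)) · det(A + u uᵀ). -/
open scoped Matrix

/-- Determinant ratio bound used in the objective perturbation privacy proof:
if `A` is symmetric with `A - 2nc·I` positive semidefinite (`n, c > 0`) and
`‖v‖₂² ≤ t`, then `det(A + vvᵀ) ≤ (1 + t/(2nc)) · det(A + uuᵀ)`. -/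
theorem det_outer_ratio_bound {d : ℕ} (A : Matrix (Fin d) (Fin d) ℝ)
    (hA : A.IsSymm) (n c t : ℝ) (hn : 0 < n) (hc : 0 < c) (ht : 0 ≤ t)
    (hpsd : (A - (2 * n * c) • (1 : Matrix (Fin d) (Fin d) ℝ)).PosSemidef)
    (u v : Fin d → ℝ) (hv : ∑ i, v i ^ 2 ≤ t) :
    (A + Matrix.vecMulVec v v).det ≤
      (1 + t / (2 * n * c)) * (A + Matrix.vecMulVec u u).det := by
  have hk : (0:ℝ) < 2 * n * c := by positivity
  -- A is positive definite
  have hApd : A.PosDef := by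
    have hrw : A = (A - (2 * n * c) • (1 : Matrix (Fin d) (Fin d) ℝ)) +
        (2 * n * c) • (1 : Matrix (Fin d) (Fin d) ℝ) := by abel
    rw [hrw]
    refine Matrix.PosDef.posSemidef_add hpsd ?_
    rw [Matrix.smul_one_eq_diagonal]
    exact Matrix.PosDef.diagonal fun _ => hk
  have hdet : IsUnit A.det := hApd.det_pos.ne'.isUnit
  -- matrix determinant lemma for both sides
  have hdl : ∀ x : Fin d → ℝ,
      (A + Matrix.vecMulVec x x).det = A.det * (1 + x ⬝ᵥ (A⁻¹ *ᵥ x)) := by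
    intro x
    have hsym : ∀ i j, A⁻¹ i j = A⁻¹ j i := fun i j => by
      have h := hApd.inv.isHermitian
      rw [Matrix.IsHermitian, Matrix.conjTranspose_eq_transpose_of_trivial] at h
      conv_lhs => rw [← h]
      rfl
    rw [Matrix.vecMulVec_eq (Fin 1), Matrix.det_add_replicateCol_mul_replicateRow hdet]
    congr 1
    simp only [Matrix.det_unique]
    simp only [Matrix.add_apply, Matrix.one_apply_eq, Matrix.mul_apply, Matrix.replicateRow_apply,
      Matrix.replicateCol_apply, dotProduct, Matrix.mulVec, Finset.mul_sum, Finset.sum_mul]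
    congr 1
    refine Finset.sum_congr rfl fun i _ => Finset.sum_congr rfl fun j _ => ?_
    rw [hsym]
    ring
  -- bound on v ⬝ᵥ A⁻¹ v
  set w : Fin d → ℝ := A⁻¹ *ᵥ v with hw
  have hAw : A *ᵥ w = v := by
    rw [hw, Matrix.mulVec_mulVec, Matrix.mul_nonsing_inv _ hdet, Matrix.one_mulVec]
  have h1 : 2 * n * c * (w ⬝ᵥ w) ≤ w ⬝ᵥ v := by
    have := hpsd.dotProduct_mulVec_nonneg w
    simp only [star_trivial, Matrix.sub_mulVec, dotProduct_sub,
      Matrix.smul_mulVec, Matrix.one_mulVec, dotProduct_smul,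
      smul_eq_mul, hAw] at this
    linarith
  have h2 : 0 ≤ (v - (2*n*c) • w) ⬝ᵥ (v - (2*n*c) • w) := by
    rw [dotProduct]
    exact Finset.sum_nonneg fun i _ => mul_self_nonneg _
  have h2' : 0 ≤ v ⬝ᵥ v - 2 * (2*n*c) * (w ⬝ᵥ v) + (2*n*c)^2 * (w ⬝ᵥ w) := by
    have := h2
    simp only [sub_dotProduct, dotProduct_sub, smul_dotProduct,
      dotProduct_smul, smul_eq_mul] at this
    have hcomm : v ⬝ᵥ w = w ⬝ᵥ v := dotProduct_comm v w
    nlinarith [this]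
  have hvv : v ⬝ᵥ v ≤ t := by
    rw [dotProduct]
    calc ∑ i, v i * v i = ∑ i, v i ^ 2 := by simp [sq]
    _ ≤ t := hv
  have hs : v ⬝ᵥ w ≤ t / (2 * n * c) := by
    rw [dotProduct_comm, le_div_iff₀ hk]
    nlinarith [h1, h2', hvv]
  have hu0 : 0 ≤ u ⬝ᵥ (A⁻¹ *ᵥ u) := by
    have := hApd.inv.posSemidef.dotProduct_mulVec_nonneg u
    simpa using this
  rw [hdl v, hdl u]
  have hdpos : 0 < A.det := hApd.det_pos
  have htk : 0 ≤ t / (2 * n * c) := by positivity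
  nlinarith [mul_le_mul_of_nonneg_left hs hdpos.le, mul_nonneg hdpos.le hu0,
    mul_nonneg hdpos.le (mul_nonneg htk hu0)]
end

section
/- Let S(z) = 1/(1 + exp(−z)) denote the sigmoid function. Let θ ∈ ℝ^d, let xₙ, x_z ∈ ℝ^d with ‖xₙ‖₂ ≤ 1 and ‖x_z‖₂ ≤ 1, let yₙ, y_z ∈ {−1, 1}, and let n ≥ 1. Then (1/n)·‖ S(−yₙ·⟨θ,xₙ⟩)² · xₙxₙᵀ − S(−y_z·⟨θ,x_z⟩)² · x_z x_zᵀ ‖_F ≤ 2·S(‖θ‖₂)² / n, where ‖M‖_F = sqrt(Σ_{j,k} M[j,k]²) is the Frobenius norm. -/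
open scoped RealInnerProductSpace

/-- The sigmoid function. -/
noncomputable def S (z : ℝ) : ℝ := 1 / (1 + Real.exp (-z))

lemma S_nonneg (z : ℝ) : 0 ≤ S z := by
  unfold S
  positivity

lemma S_mono {a b : ℝ} (h : a ≤ b) : S a ≤ S b := by
  unfold S
  apply one_div_le_one_div_of_le
  · positivity
  · have := Real.exp_le_exp.mpr (neg_le_neg h)
    linarith

lemma frob_eq {d : ℕ} (c : ℝ) (x : Fin d → ℝ) :
    Real.sqrt (∑ j, ∑ k, (c * (x j * x k)) ^ 2) = |c| * ∑ j, (x j) ^ 2 := by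
  have hrow : ∀ j, ∑ k, (c * (x j * x k)) ^ 2
      = c ^ 2 * (x j) ^ 2 * ∑ k, (x k) ^ 2 := by
    intro j
    rw [Finset.mul_sum]
    exact Finset.sum_congr rfl fun k _ => by ring
  have h : ∑ j, ∑ k, (c * (x j * x k)) ^ 2
      = c ^ 2 * (∑ j, (x j) ^ 2) ^ 2 := by
    simp only [hrow]
    rw [← Finset.sum_mul, ← Finset.mul_sum]
    ring
  rw [h, Real.sqrt_mul (sq_nonneg c), Real.sqrt_sq_eq_abs, Real.sqrt_sq_eq_abs,
    abs_of_nonneg (by positivity : (0:ℝ) ≤ ∑ j, (x j) ^ 2)]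

lemma sum_sq_eq_norm_sq {d : ℕ} (x : EuclideanSpace ℝ (Fin d)) :
    ∑ j, (x j) ^ 2 = ‖x‖ ^ 2 := by
  rw [EuclideanSpace.norm_eq, Real.sq_sqrt (by positivity)]
  simp [Real.norm_eq_abs, sq_abs]

/-- L₂-sensitivity of the logistic regression covariance matrix: the Frobenius
norm of the difference of two per-record gradient outer products
`S(−yθᵀx)² x xᵀ`, divided by `n`, is at most `2 S(‖θ‖₂)²/n`. -/
theorem logistic_covariance_sensitivity {d : ℕ} (θ : EuclideanSpace ℝ (Fin d))
    (xn xz : EuclideanSpace ℝ (Fin d)) (hxn : ‖xn‖ ≤ 1) (hxz : ‖xz‖ ≤ 1)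
    (yn yz : ℝ) (hyn : yn = 1 ∨ yn = -1) (hyz : yz = 1 ∨ yz = -1)
    (n : ℕ) (hn : 1 ≤ n) :
    (1 / (n : ℝ)) * Real.sqrt (∑ j, ∑ k,
        (S (-(yn * ⟪θ, xn⟫)) ^ 2 * (xn j * xn k)
          - S (-(yz * ⟪θ, xz⟫)) ^ 2 * (xz j * xz k)) ^ 2)
      ≤ 2 * S ‖θ‖ ^ 2 / n := by
  set cn := S (-(yn * ⟪θ, xn⟫)) ^ 2 with hcn
  set cz := S (-(yz * ⟪θ, xz⟫)) ^ 2 with hcz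
  set F : EuclideanSpace ℝ (Fin d × Fin d) := WithLp.toLp 2 (fun p : Fin d × Fin d => cn * (xn p.1 * xn p.2))
  set G : EuclideanSpace ℝ (Fin d × Fin d) := WithLp.toLp 2 (fun p : Fin d × Fin d => cz * (xz p.1 * xz p.2))
  have hnormF : ∀ (H : EuclideanSpace ℝ (Fin d × Fin d)),
      ‖H‖ = Real.sqrt (∑ p : Fin d × Fin d, (H p) ^ 2) := by
    intro H
    rw [EuclideanSpace.norm_eq]
    simp [Real.norm_eq_abs, sq_abs]
  have key : Real.sqrt (∑ j, ∑ k,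
        (cn * (xn j * xn k) - cz * (xz j * xz k)) ^ 2) = ‖F - G‖ := by
    rw [hnormF, Fintype.sum_prod_type]
    rfl
  have hbound : ∀ (y : ℝ) (x : EuclideanSpace ℝ (Fin d)), y = 1 ∨ y = -1 → ‖x‖ ≤ 1 →
      Real.sqrt (∑ p : Fin d × Fin d, ((S (-(y * ⟪θ, x⟫)) ^ 2) * (x p.1 * x p.2)) ^ 2)
        ≤ S ‖θ‖ ^ 2 := by
    intro y x hy hx
    rw [Fintype.sum_prod_type, frob_eq, sum_sq_eq_norm_sq]
    have h1 : -(y * ⟪θ, x⟫) ≤ ‖θ‖ := by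
      have habs := abs_real_inner_le_norm θ x
      have h2 : |(-(y * ⟪θ, x⟫))| ≤ ‖θ‖ * ‖x‖ := by
        rcases hy with h | h <;> simp [h, abs_neg] <;> exact habs
      have h3 : ‖θ‖ * ‖x‖ ≤ ‖θ‖ := by
        nlinarith [norm_nonneg θ, norm_nonneg x]
      calc -(y * ⟪θ, x⟫) ≤ |(-(y * ⟪θ, x⟫))| := le_abs_self _
        _ ≤ ‖θ‖ := le_trans h2 h3
    have hS : S (-(y * ⟪θ, x⟫)) ≤ S ‖θ‖ := S_mono h1
    have hSn := S_nonneg (-(y * ⟪θ, x⟫))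
    rw [abs_of_nonneg (by positivity)]
    nlinarith [mul_self_le_mul_self hSn hS, mul_self_le_mul_self (norm_nonneg x) hx, sq_nonneg (S (-(y * ⟪θ, x⟫)))]
  have hFn : ‖F‖ ≤ S ‖θ‖ ^ 2 := by
    rw [hnormF]; exact hbound yn xn hyn hxn
  have hGn : ‖G‖ ≤ S ‖θ‖ ^ 2 := by
    rw [hnormF]; exact hbound yz xz hyz hxz
  have htri : ‖F - G‖ ≤ 2 * S ‖θ‖ ^ 2 := by
    calc ‖F - G‖ ≤ ‖F‖ + ‖G‖ := norm_sub_le F G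
      _ ≤ 2 * S ‖θ‖ ^ 2 := by linarith
  rw [key]
  have hn' : (0:ℝ) < n := by exact_mod_cast hn
  rw [div_eq_mul_one_div (2 * S ‖θ‖ ^ 2) (n : ℝ), mul_comm (2 * S ‖θ‖ ^ 2)]
  exact mul_le_mul_of_nonneg_left htri (by positivity)
end

section
/- Fix h > 0. Let θ ∈ ℝ^d, let xₙ, x_z ∈ ℝ^d with ‖xₙ‖₂ ≤ 1 and ‖x_z‖₂ ≤ 1, let yₙ, y_z ∈ {−1, 1}, let n ≥ 1, and write H(x,y) = (1/(2h))·x xᵀ if |1 − y·⟨θ,x⟩| ≤ h and H(x,y) = 0 (the zero d×d matrix) otherwise. Then (1/n)·‖ H(xₙ,yₙ) − H(x_z,y_z) ‖_F ≤ 1/(nh), where ‖M‖_F = sqrt(Σ_{j,k} M[j,k]²) is the Frobenius norm. -/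
open scoped RealInnerProductSpace

private lemma emb_norm {d : ℕ} (M : Matrix (Fin d) (Fin d) ℝ) :
    ‖(EuclideanSpace.equiv (Fin d × Fin d) ℝ).symm (fun p => M p.1 p.2)‖
      = Real.sqrt (∑ j, ∑ k, (M j k) ^ 2) := by
  rw [EuclideanSpace.norm_eq]
  congr 1
  simp only [Real.norm_eq_abs, sq_abs]
  exact Fintype.sum_prod_type (fun p : Fin d × Fin d => M p.1 p.2 ^ 2)

/-- L₂-sensitivity of the SVM Hessian: with the per-record Hessian
`H(x,y) = (1/(2h)) x xᵀ` if `|1 − y⟨θ,x⟩| ≤ h` and `0` otherwise, the Frobenius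
norm of `H(xₙ,yₙ) − H(x_z,y_z)`, divided by `n`, is at most `1/(nh)`. -/
theorem svm_hessian_sensitivity {d : ℕ} (h : ℝ) (hh : 0 < h)
    (θ : EuclideanSpace ℝ (Fin d))
    (xn xz : EuclideanSpace ℝ (Fin d)) (hxn : ‖xn‖ ≤ 1) (hxz : ‖xz‖ ≤ 1)
    (yn yz : ℝ) (hyn : yn = 1 ∨ yn = -1) (hyz : yz = 1 ∨ yz = -1)
    (n : ℕ) (hn : 1 ≤ n)
    (H : EuclideanSpace ℝ (Fin d) → ℝ → Matrix (Fin d) (Fin d) ℝ)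
    (hH : ∀ x y, H x y = if |1 - y * ⟪θ, x⟫| ≤ h
        then Matrix.of fun j k => (1 / (2 * h)) * (x j * x k)
        else (0 : Matrix (Fin d) (Fin d) ℝ)) :
    (1 / (n : ℝ)) * Real.sqrt (∑ j, ∑ k, ((H xn yn - H xz yz) j k) ^ 2)
      ≤ 1 / (n * h) := by
  set e : Matrix (Fin d) (Fin d) ℝ → EuclideanSpace ℝ (Fin d × Fin d) :=
    fun M => (EuclideanSpace.equiv (Fin d × Fin d) ℝ).symm (fun p => M p.1 p.2) with he
  have hadd : e (H xn yn - H xz yz) = e (H xn yn) - e (H xz yz) := by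
    ext p; simp [he, Matrix.sub_apply]
  have hbound : ∀ (x : EuclideanSpace ℝ (Fin d)) (y : ℝ), ‖x‖ ≤ 1 →
      ‖e (H x y)‖ ≤ 1 / (2 * h) := by
    intro x y hx
    rw [he]
    simp only []
    rw [emb_norm, hH]
    split_ifs with hc
    · have hS : ∑ j, (x j) ^ 2 = ‖x‖ ^ 2 := by
        rw [EuclideanSpace.norm_eq, Real.sq_sqrt (by positivity)]
        simp [sq_abs]
      have hsum : ∑ j, ∑ k, (Matrix.of (fun j k => (1 / (2 * h)) * (x j * x k)) j k) ^ 2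
          = ((1 / (2 * h)) * ∑ j, (x j) ^ 2) ^ 2 := by
        simp only [Matrix.of_apply, mul_pow]
        rw [sq (∑ j, (x j) ^ 2), Finset.sum_mul_sum, Finset.mul_sum]
        refine Finset.sum_congr rfl fun j _ => ?_
        rw [Finset.mul_sum]
      rw [hsum, Real.sqrt_sq (by positivity)]
      have : (∑ j, (x j) ^ 2) ≤ 1 := by
        rw [hS]; nlinarith [norm_nonneg x]
      calc (1 / (2 * h)) * ∑ j, (x j) ^ 2 ≤ (1 / (2 * h)) * 1 := by
            apply mul_le_mul_of_nonneg_left this (by positivity)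
        _ = 1 / (2 * h) := by ring
    · simp only [Matrix.zero_apply]
      rw [show ∑ j : Fin d, ∑ k : Fin d, ((0:ℝ)) ^ 2 = 0 by simp, Real.sqrt_zero]
      positivity
  have key : Real.sqrt (∑ j, ∑ k, ((H xn yn - H xz yz) j k) ^ 2) ≤ 1 / h := by
    rw [← emb_norm]
    calc ‖e (H xn yn - H xz yz)‖ ≤ ‖e (H xn yn)‖ + ‖e (H xz yz)‖ := by
          rw [hadd]; exact norm_sub_le _ _
      _ ≤ 1 / (2 * h) + 1 / (2 * h) := add_le_add (hbound _ _ hxn) (hbound _ _ hxz)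
      _ = 1 / h := by rw [one_div, mul_inv, ← one_div h]; ring
  have hn' : (0:ℝ) < n := by exact_mod_cast hn
  rw [← one_div_mul_one_div]
  exact mul_le_mul_of_nonneg_left key (by positivity)
end
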